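/- Let u be a smooth compactly supported function on ℝⁿ and let 0 ≤ j ≤ m be integers. Then sup_{ℝⁿ} |Dʲu| ≤ C(n,j,m) (sup_{ℝⁿ} |u|)^{1 - j/m} (sup_{ℝⁿ} |Dᵐu|)^{j/m}, where Dᵏ denotes the k-th total derivative and C(n,j,m) is a constant depending only on n, j, m. -/

import Mathlib

set_option maxHeartbeats 1000000

open Fin

private lemma landau_key {g g1 g2 : ℝ → ℝ} {B : ℝ} (hB : 0 ≤ B)
    (hg : ∀ t, HasDerivAt g (g1 t) t) (hg1 : ∀ t, HasDerivAt g1 (g2 t) t)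
    (hg2B : ∀ t, |g2 t| ≤ B) {t : ℝ} (ht : 0 < t) :
    |g t - t * g1 0 - g 0| ≤ B * t ^ 2 := by
  have hlip : ∀ s ∈ Set.Icc (0:ℝ) t, |g1 s - g1 0| ≤ B * t := by
    intro s hs
    have h := Convex.norm_image_sub_le_of_norm_hasDerivWithin_le
      (f := g1) (f' := g2) (s := (Set.univ : Set ℝ)) (C := B)
      (fun y _ => (hg1 y).hasDerivWithinAt)
      (fun y _ => by simpa [Real.norm_eq_abs] using hg2B y)
      convex_univ (Set.mem_univ 0) (Set.mem_univ s)
    rw [Real.norm_eq_abs, Real.norm_eq_abs, sub_zero] at h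
    refine h.trans ?_
    have hs' : |s| ≤ t := by rw [abs_of_nonneg hs.1]; exact hs.2
    exact mul_le_mul_of_nonneg_left hs' hB
  have hφ : ∀ s ∈ Set.Icc (0:ℝ) t,
      HasDerivWithinAt (fun s => g s - s * g1 0) (g1 s - g1 0) (Set.Icc (0:ℝ) t) s := by
    intro s _
    have h := (hg s).sub ((hasDerivAt_id s).mul_const (g1 0))
    exact h.hasDerivWithinAt.congr_deriv (by ring)
  have hmvt := Convex.norm_image_sub_le_of_norm_hasDerivWithin_le
    (f := fun s => g s - s * g1 0) (f' := fun s => g1 s - g1 0)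
    (C := B * t) hφ (fun s hs => by simpa [Real.norm_eq_abs] using hlip s hs)
    (convex_Icc 0 t) (Set.left_mem_Icc.2 ht.le) (Set.right_mem_Icc.2 ht.le)
  rw [Real.norm_eq_abs, Real.norm_eq_abs, sub_zero] at hmvt
  calc |g t - t * g1 0 - g 0| = |(g t - t * g1 0) - (g 0 - 0 * g1 0)| := by ring_nf
    _ ≤ B * t * |t| := hmvt
    _ = B * t ^ 2 := by rw [abs_of_pos ht]; ring

private lemma landau_aux {g g1 g2 : ℝ → ℝ} {A B : ℝ} (hA : 0 ≤ A) (hB : 0 ≤ B)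
    (hg : ∀ t, HasDerivAt g (g1 t) t) (hg1 : ∀ t, HasDerivAt g1 (g2 t) t)
    (hgA : ∀ t, |g t| ≤ A) (hg2B : ∀ t, |g2 t| ≤ B) :
    |g1 0| ≤ 3 * Real.sqrt (A * B) := by
  have key : ∀ t : ℝ, 0 < t → t * |g1 0| ≤ 2 * A + B * t ^ 2 := by
    intro t ht
    have h0 := landau_key hB hg hg1 hg2B ht
    have h2 : t * g1 0 = (g t - g 0) - (g t - t * g1 0 - g 0) := by ring
    calc t * |g1 0| = |t * g1 0| := by rw [abs_mul, abs_of_pos ht]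
      _ = |(g t - g 0) - (g t - t * g1 0 - g 0)| := by rw [← h2]
      _ ≤ |g t - g 0| + |g t - t * g1 0 - g 0| := abs_sub _ _
      _ ≤ (|g t| + |g 0|) + B * t ^ 2 := add_le_add (abs_sub _ _) h0
      _ ≤ (A + A) + B * t ^ 2 := by have := hgA t; have := hgA 0; linarith
      _ = 2 * A + B * t ^ 2 := by ring
  have hsqrtnn : 0 ≤ 3 * Real.sqrt (A * B) := by positivity
  rcases eq_or_lt_of_le hA with hA' | hA'
  · -- A = 0
    rcases eq_or_lt_of_le hB with hB' | hB'
    · -- B = 0 : |g1 0| ≤ 2A/t for all t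
      refine le_trans (le_of_forall_pos_le_add fun ε hε => ?_) (by linarith)
      have h := key ((2 * A + 1) / ε) (by positivity)
      have h2 : 2 * A + B * ((2 * A + 1) / ε) ^ 2 = ((2 * A + 1) / ε) * (2 * A * ε / (2 * A + 1)) := by
        rw [← hB']; field_simp; ring
      rw [h2] at h
      have h3 : |g1 0| ≤ 2 * A * ε / (2 * A + 1) :=
        (mul_le_mul_iff_right₀ (by positivity)).1 h
      have h4 : 2 * A * ε / (2 * A + 1) ≤ ε := by
        rw [div_le_iff₀ (by positivity)]
        nlinarith
      linarith
    · -- A = 0 < B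
      refine le_trans (le_of_forall_pos_le_add fun ε hε => ?_) (by linarith)
      have h := key (ε / B) (div_pos hε hB')
      have h2 : 2 * A + B * (ε / B) ^ 2 = (ε / B) * ε := by rw [← hA']; field_simp; ring
      rw [h2] at h
      have := (mul_le_mul_iff_right₀ (div_pos hε hB')).1 h
      linarith
  rcases eq_or_lt_of_le hB with hB' | hB'
  · -- B = 0 : |g1 0| ≤ 2A/t for all t, conclude ≤ 0
    refine le_trans (le_of_forall_pos_le_add fun ε hε => ?_) (by linarith)
    have h := key ((2 * A + 1) / ε) (by positivity)
    have h2 : 2 * A + B * ((2 * A + 1) / ε) ^ 2 = ((2 * A + 1) / ε) * (2 * A * ε / (2 * A + 1)) := by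
      rw [← hB']; field_simp; ring
    rw [h2] at h
    have h3 : |g1 0| ≤ 2 * A * ε / (2 * A + 1) := (mul_le_mul_iff_right₀ (by positivity)).1 h
    have h4 : 2 * A * ε / (2 * A + 1) ≤ ε := by
      rw [div_le_iff₀ (by positivity)]
      nlinarith
    linarith
  · -- 0 < A, 0 < B
    have hsA : 0 < Real.sqrt A := Real.sqrt_pos.2 hA'
    have hsB : 0 < Real.sqrt B := Real.sqrt_pos.2 hB'
    have ht : 0 < Real.sqrt A / Real.sqrt B := div_pos hsA hsB
    have h := key _ ht
    have hA2 : Real.sqrt A * Real.sqrt A = A := Real.mul_self_sqrt hA'.le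
    have hB2 : Real.sqrt B * Real.sqrt B = B := Real.mul_self_sqrt hB'.le
    have hBt : B * (Real.sqrt A / Real.sqrt B) ^ 2 = A := by
      rw [div_pow, sq, sq, hA2, hB2]; field_simp
    rw [hBt, show (2:ℝ) * A + A = 3 * A by ring] at h
    have h3 : (Real.sqrt A / Real.sqrt B) * (3 * Real.sqrt (A * B)) = 3 * A := by
      rw [Real.sqrt_mul hA'.le]
      field_simp
      nlinarith [hA2]
    rw [← h3] at h
    exact (mul_le_mul_iff_right₀ ht).1 h

variable {E : Type*} [NormedAddCommGroup E] [NormedSpace ℝ E]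

private lemma hasDerivAt_ifd {u : E → ℝ} (hu : ContDiff ℝ (⊤ : ℕ∞) u) (k : ℕ)
    (z e : E) (w : Fin k → E) (t : ℝ) :
    HasDerivAt (fun s : ℝ => iteratedFDeriv ℝ k u (z + s • e) w)
      (iteratedFDeriv ℝ (k + 1) u (z + t • e) (Fin.cons e w)) t := by
  have hF : Differentiable ℝ (iteratedFDeriv ℝ k u) :=
    hu.differentiable_iteratedFDeriv (by exact_mod_cast lt_top_iff_ne_top.2 (by simp))
  have hline : HasDerivAt (fun s : ℝ => z + s • e) e t := by
    simpa using ((hasDerivAt_id t).smul_const e).const_add z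
  have h1 : HasDerivAt (fun s : ℝ => iteratedFDeriv ℝ k u (z + s • e))
      (fderiv ℝ (iteratedFDeriv ℝ k u) (z + t • e) e) t :=
    (hF _).hasFDerivAt.comp_hasDerivAt t hline
  have h2 := ((ContinuousMultilinearMap.apply ℝ (fun _ : Fin k => E) ℝ
      w).hasFDerivAt.comp_hasDerivAt t h1)
  simpa [iteratedFDeriv_succ_apply_left, Fin.tail_cons, Function.comp_def] using h2

private lemma convex_seq_nonpos (m : ℕ) (c : ℕ → ℝ)
    (hconv : ∀ k, k + 2 ≤ m → 2 * c (k + 1) ≤ c k + c (k + 2))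
    (h0 : c 0 ≤ 0) (hm : c m ≤ 0) : ∀ j ≤ m, c j ≤ 0 := by
  intro j hj
  rcases Nat.eq_zero_or_pos j with rfl | hj0
  · exact h0
  rcases eq_or_lt_of_le hj with rfl | hjm
  · exact hm
  set d : ℕ → ℝ := fun k => c (k + 1) - c k with hd
  have mono : ∀ i k, i ≤ k → k + 1 ≤ m → d i ≤ d k := by
    intro i k hik
    induction k, hik using Nat.le_induction with
    | base => intro _; exact le_rfl
    | succ k hik ih =>
      intro hkm
      have h1 : d k ≤ d (k + 1) := by
        have := hconv k (by omega)
        simp only [hd]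
        linarith
      exact le_trans (ih (by omega)) h1
  have tele : ∀ l, c l = c 0 + ∑ i ∈ Finset.range l, d i := by
    intro l
    induction l with
    | zero => simp
    | succ l ih =>
      rw [Finset.sum_range_succ, ← add_assoc, ← ih]
      simp [hd]
  have sum1 : c j ≤ c 0 + (j : ℝ) * d (j - 1) := by
    have h := Finset.sum_le_sum (f := d) (g := fun _ => d (j - 1))
      (s := Finset.range j) (fun i hi => mono i (j - 1)
        (by simp at hi; omega) (by omega))
    rw [Finset.sum_const, Finset.card_range, nsmul_eq_mul] at h
    rw [tele j]
    linarith
  have sum2 : c j + ((m : ℝ) - j) * d (j - 1) ≤ c m := by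
    have h := Finset.sum_le_sum (f := fun _ => d (j - 1)) (g := d)
      (s := Finset.Ico j m) (fun i hi => by
        simp only [Finset.mem_Ico] at hi
        exact mono (j - 1) i (by omega) (by omega))
    rw [Finset.sum_const, Nat.card_Ico, nsmul_eq_mul] at h
    have hcast : ((m - j : ℕ) : ℝ) = (m : ℝ) - j := by
      push_cast [Nat.cast_sub hj]; ring
    rw [hcast] at h
    have htele2 : c m = c j + ∑ i ∈ Finset.Ico j m, d i := by
      rw [tele m, tele j, add_assoc, Finset.sum_range_add_sum_Ico d hj]
    rw [htele2]
    linarith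
  have hJ : (0 : ℝ) < j := by exact_mod_cast hj0
  have hJM : (j : ℝ) < m := by exact_mod_cast hjm
  have e1 : ((m : ℝ) - j) * c j ≤ ((m : ℝ) - j) * (c 0 + (j : ℝ) * d (j - 1)) :=
    mul_le_mul_of_nonneg_left sum1 (by linarith)
  have e2 : (j : ℝ) * (c j + ((m : ℝ) - j) * d (j - 1)) ≤ (j : ℝ) * c m :=
    mul_le_mul_of_nonneg_left sum2 hJ.le
  have e3 : ((m : ℝ) - j) * c 0 ≤ 0 := mul_nonpos_of_nonneg_of_nonpos (by linarith) h0
  have e4 : (j : ℝ) * c m ≤ 0 := mul_nonpos_of_nonneg_of_nonpos hJ.le hm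
  nlinarith [e1, e2, e3, e4, hJ, hJM]

/-- interpolation inequality for sup-norms of derivatives of a smooth
compactly supported function on `ℝⁿ`:
`sup |Dʲu| ≤ C(n,j,m) (sup |u|)^{1-j/m} (sup |Dᵐu|)^{j/m}` for `0 ≤ j ≤ m`. -/
theorem statement_6 (n j m : ℕ) (hjm : j ≤ m) :
    ∃ C : ℝ, 0 < C ∧
      ∀ u : EuclideanSpace ℝ (Fin n) → ℝ, ContDiff ℝ (⊤ : ℕ∞) u → HasCompactSupport u →
        ∀ x, ‖iteratedFDeriv ℝ j u x‖ ≤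
          C * (⨆ y, ‖u y‖) ^ (1 - (j : ℝ) / m)
            * (⨆ y, ‖iteratedFDeriv ℝ m u y‖) ^ ((j : ℝ) / m) := by
  refine ⟨(3 : ℝ) ^ (m * m) + 1, by positivity, ?_⟩
  intro u hu hsupp x
  set S : ℕ → ℝ := fun k => ⨆ y, ‖iteratedFDeriv ℝ k u y‖ with hSdef
  have hbdd : ∀ k, BddAbove (Set.range fun y => ‖iteratedFDeriv ℝ k u y‖) := fun k =>
    ((hu.continuous_iteratedFDeriv (by exact_mod_cast le_top)).norm).bddAbove_range_of_hasCompactSupport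
      (hsupp.iteratedFDeriv k).norm
  have hle : ∀ k y, ‖iteratedFDeriv ℝ k u y‖ ≤ S k := fun k y => le_ciSup (hbdd k) y
  have hS0 : ∀ k, 0 ≤ S k := fun k => le_trans (norm_nonneg _) (hle k 0)
  have hgoal0 : (⨆ y, ‖u y‖) = S 0 := by
    simp only [hSdef, norm_iteratedFDeriv_zero]
  have hgoalm : (⨆ y, ‖iteratedFDeriv ℝ m u y‖) = S m := rfl
  rw [hgoal0, hgoalm]
  have hC1 : (1 : ℝ) ≤ (3 : ℝ) ^ (m * m) + 1 := by
    nlinarith [pow_nonneg (by norm_num : (0:ℝ) ≤ 3) (m * m)]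
  -- key chain inequality
  have key : ∀ k, S (k + 1) ≤ 3 * Real.sqrt (S k * S (k + 2)) := by
    intro k
    refine ciSup_le fun z => ?_
    refine ContinuousMultilinearMap.opNorm_le_bound (by positivity) fun v => ?_
    set e := v 0 with he
    set w := Fin.tail v with hw
    set P : ℝ := ∏ i, ‖w i‖ with hP
    have hPnn : 0 ≤ P := Finset.prod_nonneg fun i _ => norm_nonneg _
    have hA : 0 ≤ S k * P := mul_nonneg (hS0 k) hPnn
    have hB : 0 ≤ S (k + 2) * (‖e‖ * (‖e‖ * P)) := mul_nonneg (hS0 _) (by positivity)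
    have hland := landau_aux (g := fun s : ℝ => iteratedFDeriv ℝ k u (z + s • e) w)
      (g1 := fun s : ℝ => iteratedFDeriv ℝ (k + 1) u (z + s • e) (Fin.cons e w))
      (g2 := fun s : ℝ => iteratedFDeriv ℝ (k + 2) u (z + s • e) (Fin.cons e (Fin.cons e w)))
      hA hB (fun t => hasDerivAt_ifd hu k z e w t)
      (fun t => hasDerivAt_ifd hu (k + 1) z e (Fin.cons e w) t)
      (fun t => by
        rw [← Real.norm_eq_abs]
        calc ‖iteratedFDeriv ℝ k u (z + t • e) w‖
            ≤ ‖iteratedFDeriv ℝ k u (z + t • e)‖ * P :=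
              (iteratedFDeriv ℝ k u (z + t • e)).le_opNorm w
          _ ≤ S k * P := mul_le_mul_of_nonneg_right (hle k _) hPnn)
      (fun t => by
        rw [← Real.norm_eq_abs]
        have h := (iteratedFDeriv ℝ (k + 2) u (z + t • e)).le_opNorm
          (Fin.cons e (Fin.cons e w))
        simp only [Fin.prod_univ_succ, Fin.cons_zero, Fin.cons_succ, ← hP] at h
        exact h.trans (mul_le_mul_of_nonneg_right (hle (k + 2) _) (by positivity)))
    have hg10 : |iteratedFDeriv ℝ (k + 1) u (z + (0:ℝ) • e) (Fin.cons e w)|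
        = ‖iteratedFDeriv ℝ (k + 1) u z v‖ := by
      rw [zero_smul, add_zero, he, hw, Fin.cons_self_tail, Real.norm_eq_abs]
    rw [hg10] at hland
    have hAB : Real.sqrt ((S k * P) * (S (k + 2) * (‖e‖ * (‖e‖ * P))))
        = Real.sqrt (S k * S (k + 2)) * (‖e‖ * P) := by
      rw [show (S k * P) * (S (k + 2) * (‖e‖ * (‖e‖ * P)))
          = (S k * S (k + 2)) * (‖e‖ * P) ^ 2 from by ring,
        Real.sqrt_mul (mul_nonneg (hS0 k) (hS0 (k + 2))), Real.sqrt_sq (by positivity)]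
    rw [hAB] at hland
    have hprod : ∏ i, ‖v i‖ = ‖e‖ * P := by
      rw [hP, hw, he, Fin.prod_univ_succ]
      rfl
    rw [hprod]
    calc ‖iteratedFDeriv ℝ (k + 1) u z v‖
        ≤ 3 * (Real.sqrt (S k * S (k + 2)) * (‖e‖ * P)) := hland
      _ = 3 * Real.sqrt (S k * S (k + 2)) * (‖e‖ * P) := by ring
  -- upward propagation of vanishing
  have up : ∀ k, S k = 0 → S (k + 1) = 0 := by
    intro k hk
    have hzero : ∀ y, iteratedFDeriv ℝ k u y = 0 := by
      intro y
      have h := hle k y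
      rw [hk] at h
      exact norm_le_zero_iff.1 h
    have hzero' : ∀ y, iteratedFDeriv ℝ (k + 1) u y = 0 := by
      intro y
      ext v
      rw [iteratedFDeriv_succ_apply_left]
      have hfun : (iteratedFDeriv ℝ k u) = fun _ => (0 : ContinuousMultilinearMap ℝ
          (fun _ : Fin k => EuclideanSpace ℝ (Fin n)) ℝ) := funext hzero
      rw [hfun, fderiv_fun_const]
      simp
    have : ∀ y, ‖iteratedFDeriv ℝ (k + 1) u y‖ = 0 := fun y => by rw [hzero' y, norm_zero]
    simp only [hSdef, this]
    exact ciSup_const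
  have up' : ∀ k l, k ≤ l → S k = 0 → S l = 0 := by
    intro k l hkl
    induction l, hkl using Nat.le_induction with
    | base => exact fun h => h
    | succ l _ ih => exact fun h => up l (ih h)
  -- downward propagation of vanishing
  have down : ∀ k, S (k + 2) = 0 → S (k + 1) = 0 := by
    intro k hk
    have h := key k
    rw [hk, mul_zero, Real.sqrt_zero, mul_zero] at h
    exact le_antisymm h (hS0 _)
  have downchain : ∀ t s, S (s + 1 + t) = 0 → S (s + 1) = 0 := by
    intro t
    induction t with
    | zero => exact fun s h => h
    | succ t ih =>
      intro s h
      apply ih s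
      have h2 : S (s + t + 2) = 0 := by rw [show s + t + 2 = s + 1 + (t + 1) by ring]; exact h
      have h3 := down (s + t) h2
      rwa [show s + 1 + t = s + t + 1 by ring]
  -- trivial case j = 0
  rcases Nat.eq_zero_or_pos j with rfl | hj1
  · rw [Nat.cast_zero, zero_div, sub_zero, Real.rpow_one, Real.rpow_zero, mul_one]
    calc ‖iteratedFDeriv ℝ 0 u x‖ ≤ S 0 := hle 0 x
      _ = 1 * S 0 := (one_mul _).symm
      _ ≤ ((3 : ℝ) ^ (m * m) + 1) * S 0 := mul_le_mul_of_nonneg_right hC1 (hS0 0)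
  -- trivial case j = m
  rcases eq_or_lt_of_le hjm with rfl | hjm'
  · have hm0 : (j : ℝ) ≠ 0 := Nat.cast_ne_zero.2 (by omega)
    rw [div_self hm0, sub_self, Real.rpow_zero, Real.rpow_one, mul_one]
    calc ‖iteratedFDeriv ℝ j u x‖ ≤ S j := hle j x
      _ = 1 * S j := (one_mul _).symm
      _ ≤ ((3 : ℝ) ^ (j * j) + 1) * S j := mul_le_mul_of_nonneg_right hC1 (hS0 j)
  -- now 1 ≤ j < m
  have hRHSnonneg : 0 ≤ ((3 : ℝ) ^ (m * m) + 1) * S 0 ^ (1 - (j : ℝ) / m)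
      * S m ^ ((j : ℝ) / m) :=
    mul_nonneg (mul_nonneg (by positivity) (Real.rpow_nonneg (hS0 0) _))
      (Real.rpow_nonneg (hS0 m) _)
  by_cases hSm : S m = 0
  · have hSj : S j = 0 := by
      obtain ⟨s, rfl⟩ : ∃ s, j = s + 1 := ⟨j - 1, by omega⟩
      refine downchain (m - (s + 1)) s ?_
      rw [show s + 1 + (m - (s + 1)) = m by omega]
      exact hSm
    have hL : ‖iteratedFDeriv ℝ j u x‖ ≤ 0 := by rw [← hSj]; exact hle j x
    exact hL.trans hRHSnonneg
  by_cases hS00 : S 0 = 0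
  · have hSj : S j = 0 := up' 0 j (Nat.zero_le j) hS00
    have hL : ‖iteratedFDeriv ℝ j u x‖ ≤ 0 := by rw [← hSj]; exact hle j x
    exact hL.trans hRHSnonneg
  -- main case: everything positive
  have pos : ∀ k, k ≤ m → 0 < S k := by
    intro k hk
    rcases (hS0 k).lt_or_eq with h | h
    · exact h
    · exact absurd (up' k m hk h.symm) hSm
  have hm1 : 0 < m := by omega
  have hM : (0 : ℝ) < m := by exact_mod_cast hm1
  have hJ0 : (0 : ℝ) ≤ j := Nat.cast_nonneg j
  have hJM : (j : ℝ) < m := by exact_mod_cast hjm'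
  set L := Real.log 3 with hLdef
  have hlog : ∀ k, k + 2 ≤ m →
      2 * Real.log (S (k + 1)) ≤ 2 * L + Real.log (S k) + Real.log (S (k + 2)) := by
    intro k hk
    have h := key k
    have hp1 : 0 < S (k + 1) := pos (k + 1) (by omega)
    have hpk : 0 < S k := pos k (by omega)
    have hpk2 : 0 < S (k + 2) := pos (k + 2) hk
    have h1 : Real.log (S (k + 1)) ≤ Real.log (3 * Real.sqrt (S k * S (k + 2))) :=
      Real.log_le_log hp1 h
    rw [Real.log_mul (by norm_num) (by positivity), Real.log_sqrt (by positivity),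
      Real.log_mul hpk.ne' hpk2.ne'] at h1
    rw [hLdef]
    linarith
  set c : ℕ → ℝ := fun k => (m : ℝ) * Real.log (S k)
      - (((m : ℝ) - k) * Real.log (S 0) + (k : ℝ) * Real.log (S m))
      - L * ((k : ℝ) * ((m : ℝ) - k)) * m with hcdef
  have hconv : ∀ k, k + 2 ≤ m → 2 * c (k + 1) ≤ c k + c (k + 2) := by
    intro k hk
    have h2 := hlog k hk
    have h3 := mul_le_mul_of_nonneg_left h2 hM.le
    simp only [hcdef]
    push_cast
    nlinarith [h3]
  have hc0 : c 0 ≤ 0 := le_of_eq (by simp only [hcdef]; push_cast; ring)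
  have hcm : c m ≤ 0 := le_of_eq (by simp only [hcdef]; push_cast; ring)
  have hcj := convex_seq_nonpos m c hconv hc0 hcm j hjm
  have hexp : Real.log (S j) ≤ (1 - (j : ℝ) / m) * Real.log (S 0)
      + ((j : ℝ) / m) * Real.log (S m) + L * ((j : ℝ) * ((m : ℝ) - j)) := by
    have h5 : (m : ℝ) * Real.log (S j) ≤ (m : ℝ) * ((1 - (j : ℝ) / m) * Real.log (S 0)
        + ((j : ℝ) / m) * Real.log (S m) + L * ((j : ℝ) * ((m : ℝ) - j))) := by
      have expand : (m : ℝ) * ((1 - (j : ℝ) / m) * Real.log (S 0)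
          + ((j : ℝ) / m) * Real.log (S m) + L * ((j : ℝ) * ((m : ℝ) - j)))
          = ((m : ℝ) - j) * Real.log (S 0) + (j : ℝ) * Real.log (S m)
            + L * ((j : ℝ) * ((m : ℝ) - j)) * m := by
        field_simp
      rw [expand]
      simp only [hcdef] at hcj
      linarith
    exact le_of_mul_le_mul_left h5 hM
  have hSjpos : 0 < S j := pos j hjm
  have hS0pos : 0 < S 0 := pos 0 (Nat.zero_le m)
  have hSmpos : 0 < S m := pos m le_rfl
  have hsj : S j ≤ S 0 ^ (1 - (j : ℝ) / m) * S m ^ ((j : ℝ) / m)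
      * Real.exp (L * ((j : ℝ) * ((m : ℝ) - j))) := by
    calc S j = Real.exp (Real.log (S j)) := (Real.exp_log hSjpos).symm
      _ ≤ Real.exp ((1 - (j : ℝ) / m) * Real.log (S 0) + ((j : ℝ) / m) * Real.log (S m)
            + L * ((j : ℝ) * ((m : ℝ) - j))) := Real.exp_le_exp.2 hexp
      _ = S 0 ^ (1 - (j : ℝ) / m) * S m ^ ((j : ℝ) / m)
            * Real.exp (L * ((j : ℝ) * ((m : ℝ) - j))) := by
          rw [Real.exp_add, Real.exp_add, Real.rpow_def_of_pos hS0pos,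
            Real.rpow_def_of_pos hSmpos]
          ring_nf
  have hexpbound : Real.exp (L * ((j : ℝ) * ((m : ℝ) - j))) ≤ (3 : ℝ) ^ (m * m) := by
    have h6 : Real.exp (L * ((j : ℝ) * ((m : ℝ) - j)))
        = (3 : ℝ) ^ ((j : ℝ) * ((m : ℝ) - j)) := by
      rw [Real.rpow_def_of_pos (by norm_num : (0 : ℝ) < 3), hLdef]
    rw [h6]
    have h7 : (3 : ℝ) ^ (((m * m : ℕ)) : ℝ) = (3 : ℝ) ^ (m * m) := Real.rpow_natCast 3 (m * m)
    rw [← h7]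
    refine (Real.rpow_le_rpow_left_iff (by norm_num : (1 : ℝ) < 3)).2 ?_
    push_cast
    nlinarith [hJ0, hJM]
  have hpow0 : (0:ℝ) ≤ S 0 ^ (1 - (j : ℝ) / m) * S m ^ ((j : ℝ) / m) :=
    mul_nonneg (Real.rpow_nonneg (hS0 0) _) (Real.rpow_nonneg (hS0 m) _)
  calc ‖iteratedFDeriv ℝ j u x‖ ≤ S j := hle j x
    _ ≤ S 0 ^ (1 - (j : ℝ) / m) * S m ^ ((j : ℝ) / m)
        * Real.exp (L * ((j : ℝ) * ((m : ℝ) - j))) := hsj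
    _ ≤ S 0 ^ (1 - (j : ℝ) / m) * S m ^ ((j : ℝ) / m) * (3 : ℝ) ^ (m * m) :=
        mul_le_mul_of_nonneg_left hexpbound hpow0
    _ = (3 : ℝ) ^ (m * m) * (S 0 ^ (1 - (j : ℝ) / m) * S m ^ ((j : ℝ) / m)) := by ring
    _ ≤ ((3 : ℝ) ^ (m * m) + 1) * (S 0 ^ (1 - (j : ℝ) / m) * S m ^ ((j : ℝ) / m)) :=
        mul_le_mul_of_nonneg_right (by linarith) hpow0
    _ = ((3 : ℝ) ^ (m * m) + 1) * S 0 ^ (1 - (j : ℝ) / m) * S m ^ ((j : ℝ) / m) := by ring
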